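/- Fix η ∈ (0,1), γ > 0, r > 0, and suppose the regime condition u_q(θ) > √3 and u_p(θ) > √3 holds for every θ ∈ [0, π/2], with B(0) < 0 and B(π/2) > 0; let θ* ∈ (0, π/2) be the unique zero of the balance function B. Then the function P̃(θ) = P_q(θ) + P_p(θ) is strictly decreasing on [0, θ*], strictly increasing on [θ*, π/2], and attains its strict global minimum on [0, π/2] uniquely at θ = θ*. -/

import Mathlib

/-- The standard normal density `φ(x) = e^{-x²/2}/√(2π)`. -/
noncomputable def gaussPdf (x : ℝ) : ℝ := Real.exp (-x ^ 2 / 2) / Real.sqrt (2 * Real.pi)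

/-- The Gaussian tail `Q(x) = ∫_x^∞ φ(t) dt`. -/
noncomputable def gaussTail (x : ℝ) : ℝ := ∫ t in Set.Ioi x, gaussPdf t

/-- Isotropic loss-induced spread `s₀ = (1-η)/(2η)`. -/
noncomputable def s0 (η : ℝ) : ℝ := (1 - η) / (2 * η)

/-- The GKP lattice constant `a = √(2π)`. -/
noncomputable def aGKP : ℝ := Real.sqrt (2 * Real.pi)

/-- Effective spread `σ_q(θ) = √(s₀ + γ sin²θ)`. -/
noncomputable def sigq (η γ θ : ℝ) : ℝ := Real.sqrt (s0 η + γ * Real.sin θ ^ 2)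

/-- Effective spread `σ_p(θ) = √(s₀ + γ cos²θ)`. -/
noncomputable def sigp (η γ θ : ℝ) : ℝ := Real.sqrt (s0 η + γ * Real.cos θ ^ 2)

/-- Normalized correction radius `u_q(θ) = (a r / 2) / σ_q(θ)`. -/
noncomputable def uq (η γ r θ : ℝ) : ℝ := aGKP * r / 2 / sigq η γ θ

/-- Normalized correction radius `u_p(θ) = (a / (2r)) / σ_p(θ)`. -/
noncomputable def up (η γ r θ : ℝ) : ℝ := aGKP / (2 * r) / sigp η γ θ

/-- The balance function `B(θ) = r²·φ(u_q)/σ_q³ − φ(u_p)/σ_p³`. -/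
noncomputable def balance (η γ r θ : ℝ) : ℝ :=
  r ^ 2 * gaussPdf (uq η γ r θ) / sigq η γ θ ^ 3 - gaussPdf (up η γ r θ) / sigp η γ θ ^ 3

/-- Quadrature error probability `P_q(θ) = 2 Q(u_q(θ))`. -/
noncomputable def Pq (η γ r θ : ℝ) : ℝ := 2 * gaussTail (uq η γ r θ)

/-- Quadrature error probability `P_p(θ) = 2 Q(u_p(θ))`. -/
noncomputable def Pp (η γ r θ : ℝ) : ℝ := 2 * gaussTail (up η γ r θ)

/-- Logical error rate `P_err(θ) = 1 − (1 − P_q(θ))(1 − P_p(θ))`. -/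
noncomputable def Perr (η γ r θ : ℝ) : ℝ := 1 - (1 - Pq η γ r θ) * (1 - Pp η γ r θ)

/-! The derivative of `P_q + P_p` is `(a γ sin θ cos θ / r) · B(θ)`, and the prefactor is positive
on `(0, π/2)`, so the total error falls while `B < 0` and rises while `B > 0`. It remains to see
that `B` is strictly increasing. As `θ` grows, `σ_q` grows and `σ_p` shrinks, and
`σ ↦ φ(c/σ)/σ³ = u³ φ(u) / c³` (with `u = c/σ`) is increasing in `σ` as long as `u > √3`,
because `(u³ φ(u))' = u² (3 - u²) φ(u)`. -/

open Real Set MeasureTheory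

lemma hasDerivAt_integral_Ioi {f : ℝ → ℝ} (hf : Continuous f) (hfi : Integrable f) (x : ℝ) :
    HasDerivAt (fun y => ∫ t in Ioi y, f t) (-f x) x := by
  have hsplit : (fun y => ∫ t in Ioi y, f t) = fun y => (∫ t in Ioi 0, f t) - ∫ t in 0..y, f t :=
    funext fun y => by
      rw [← intervalIntegral.integral_Ioi_sub_Ioi' hfi.integrableOn hfi.integrableOn]; ring
  rw [hsplit, ← zero_sub]
  exact (hasDerivAt_const x _).sub
    (intervalIntegral.integral_hasDerivAt_right hfi.intervalIntegrable
      (hf.stronglyMeasurableAtFilter _ _) hf.continuousAt)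

lemma continuous_gaussPdf : Continuous gaussPdf := by
  unfold gaussPdf
  fun_prop

lemma integrable_gaussPdf : Integrable gaussPdf := by
  have h := (integrable_exp_neg_mul_sq (by norm_num : (0 : ℝ) < 1 / 2)).div_const √(2 * π)
  convert h using 1
  ext x
  unfold gaussPdf
  ring_nf

lemma hasDerivAt_gaussTail (x : ℝ) : HasDerivAt gaussTail (-gaussPdf x) x :=
  hasDerivAt_integral_Ioi continuous_gaussPdf integrable_gaussPdf x

lemma hasDerivAt_gaussTail_div {σ : ℝ → ℝ} {σ' θ : ℝ} (c : ℝ) (hσ : HasDerivAt σ σ' θ)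
    (hσ₀ : σ θ ≠ 0) :
    HasDerivAt (fun θ => gaussTail (c / σ θ)) (c * gaussPdf (c / σ θ) * σ' / σ θ ^ 2) θ :=
  ((hasDerivAt_gaussTail _).comp θ ((hasDerivAt_const θ c).div hσ hσ₀)).congr_deriv
    (by simp only [Pi.div_apply]; ring)

lemma hasDerivAt_gaussPdf (x : ℝ) : HasDerivAt gaussPdf (-x * gaussPdf x) x := by
  have harg : HasDerivAt (fun y : ℝ => -y ^ 2 / 2) (-x) x :=
    ((hasDerivAt_pow 2 x).neg.div_const 2).congr_deriv (by ring)
  exact (harg.exp.div_const √(2 * π)).congr_deriv (by unfold gaussPdf; ring)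

lemma strictAntiOn_cube_mul_gaussPdf : StrictAntiOn (fun u => u ^ 3 * gaussPdf u) (Ici √3) := by
  have hderiv : ∀ u, HasDerivAt (fun u => u ^ 3 * gaussPdf u)
      (u ^ 2 * (3 - u ^ 2) * gaussPdf u) u := fun u =>
    ((hasDerivAt_pow 3 u).mul (hasDerivAt_gaussPdf u)).congr_deriv (by push_cast; ring)
  refine strictAntiOn_of_deriv_neg (convex_Ici _)
    (fun u _ => (hderiv u).continuousAt.continuousWithinAt) fun u hu => ?_
  rw [interior_Ici] at hu
  have hu3 : 3 < u ^ 2 := by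
    have := (sqrt_lt' (lt_of_le_of_lt (sqrt_nonneg 3) hu)).1 hu
    linarith
  have hpdf : 0 < gaussPdf u := by unfold gaussPdf; positivity
  rw [(hderiv u).deriv]
  exact mul_neg_of_neg_of_pos (mul_neg_of_pos_of_neg (by nlinarith) (by linarith)) hpdf

lemma gaussPdf_div_div_pow_three_lt {c σ₁ σ₂ : ℝ} (hσ₁ : 0 < σ₁) (hσ : σ₁ < σ₂)
    (hu : √3 < c / σ₂) : gaussPdf (c / σ₁) / σ₁ ^ 3 < gaussPdf (c / σ₂) / σ₂ ^ 3 := by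
  have hσ₂ : 0 < σ₂ := hσ₁.trans hσ
  have hc : 0 < c := (div_pos_iff_of_pos_right hσ₂).1 ((sqrt_nonneg 3).trans_lt hu)
  have hrescale : ∀ σ, 0 < σ → gaussPdf (c / σ) / σ ^ 3 = (c / σ) ^ 3 * gaussPdf (c / σ) / c ^ 3 :=
    fun σ hσ => by field_simp
  have hu₁₂ : c / σ₂ < c / σ₁ := div_lt_div_of_pos_left hc hσ₁ hσ
  rw [hrescale σ₁ hσ₁, hrescale σ₂ hσ₂]
  gcongr ?_ / _
  exact strictAntiOn_cube_mul_gaussPdf hu.le (hu.trans hu₁₂).le hu₁₂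

lemma strictMonoOn_sin_sq : StrictMonoOn (fun θ => sin θ ^ 2) (Icc 0 (π / 2)) := by
  intro x hx y hy hxy
  have hsin :=
    strictMonoOn_sin ⟨by linarith [hx.1, pi_pos], hx.2⟩ ⟨by linarith [hy.1, pi_pos], hy.2⟩ hxy
  have hx₀ := sin_nonneg_of_nonneg_of_le_pi hx.1 (by linarith [hx.2, pi_pos])
  exact pow_lt_pow_left₀ hsin hx₀ two_ne_zero

section Spreads

variable {η γ : ℝ}

lemma s0_pos (hη : η ∈ Ioo 0 1) : 0 < s0 η :=
  div_pos (by linarith [hη.2]) (by linarith [hη.1])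

lemma sigq_pos (hη : η ∈ Ioo 0 1) (hγ : 0 ≤ γ) (θ : ℝ) : 0 < sigq η γ θ :=
  sqrt_pos.2 (by have := s0_pos hη; positivity)

lemma sigp_pos (hη : η ∈ Ioo 0 1) (hγ : 0 ≤ γ) (θ : ℝ) : 0 < sigp η γ θ :=
  sqrt_pos.2 (by have := s0_pos hη; positivity)

lemma strictMonoOn_sigq (hη : η ∈ Ioo 0 1) (hγ : 0 < γ) :
    StrictMonoOn (sigq η γ) (Icc 0 (π / 2)) := fun x hx y hy hxy =>
  sqrt_lt_sqrt (by have := s0_pos hη; positivity)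
    (by have := strictMonoOn_sin_sq hx hy hxy; simp only at this; gcongr)

lemma strictAntiOn_sigp (hη : η ∈ Ioo 0 1) (hγ : 0 < γ) :
    StrictAntiOn (sigp η γ) (Icc 0 (π / 2)) := fun x hx y hy hxy =>
  sqrt_lt_sqrt (by have := s0_pos hη; positivity) (by
    have := strictMonoOn_sin_sq hx hy hxy
    simp only [cos_sq'] at this ⊢
    nlinarith)

lemma hasDerivAt_sigq (hη : η ∈ Ioo 0 1) (hγ : 0 ≤ γ) (θ : ℝ) :
    HasDerivAt (sigq η γ) (γ * sin θ * cos θ / sigq η γ θ) θ := by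
  have harg : HasDerivAt (fun θ => s0 η + γ * sin θ ^ 2) (2 * (γ * sin θ * cos θ)) θ :=
    (((hasDerivAt_sin θ).pow 2).const_mul γ).const_add (s0 η) |>.congr_deriv (by push_cast; ring)
  have hsig := sigq_pos hη hγ θ
  exact (harg.sqrt (by have := s0_pos hη; positivity)).congr_deriv (by
    rw [← sigq]; field_simp)

lemma hasDerivAt_sigp (hη : η ∈ Ioo 0 1) (hγ : 0 ≤ γ) (θ : ℝ) :
    HasDerivAt (sigp η γ) (-(γ * sin θ * cos θ) / sigp η γ θ) θ := by
  have harg : HasDerivAt (fun θ => s0 η + γ * cos θ ^ 2) (2 * -(γ * sin θ * cos θ)) θ :=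
    (((hasDerivAt_cos θ).pow 2).const_mul γ).const_add (s0 η) |>.congr_deriv (by push_cast; ring)
  have hsig := sigp_pos hη hγ θ
  exact (harg.sqrt (by have := s0_pos hη; positivity)).congr_deriv (by
    rw [← sigp]; field_simp)

end Spreads

lemma strictMonoOn_balance {η γ r : ℝ} (hη : η ∈ Ioo 0 1) (hγ : 0 < γ) (hr : 0 < r)
    (hreg : ∀ θ ∈ Icc 0 (π / 2), √3 < uq η γ r θ ∧ √3 < up η γ r θ) :
    StrictMonoOn (balance η γ r) (Icc 0 (π / 2)) := by
  intro x hx y hy hxy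
  have hq : gaussPdf (uq η γ r x) / sigq η γ x ^ 3 < gaussPdf (uq η γ r y) / sigq η γ y ^ 3 :=
    gaussPdf_div_div_pow_three_lt (sigq_pos hη hγ.le x) (strictMonoOn_sigq hη hγ hx hy hxy)
      (hreg y hy).1
  have hp : gaussPdf (up η γ r y) / sigp η γ y ^ 3 < gaussPdf (up η γ r x) / sigp η γ x ^ 3 :=
    gaussPdf_div_div_pow_three_lt (sigp_pos hη hγ.le y) (strictAntiOn_sigp hη hγ hx hy hxy)
      (hreg x hx).2
  have hq' := mul_lt_mul_of_pos_left hq (pow_pos hr 2)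
  simp only [balance, mul_div_assoc]
  linarith

lemma hasDerivAt_totalError {η γ r : ℝ} (hη : η ∈ Ioo 0 1) (hγ : 0 ≤ γ) (θ : ℝ) :
    HasDerivAt (fun θ => Pq η γ r θ + Pp η γ r θ)
      (aGKP * γ * sin θ * cos θ / r * balance η γ r θ) θ := by
  have hq := (hasDerivAt_gaussTail_div (aGKP * r / 2) (hasDerivAt_sigq hη hγ θ)
    (sigq_pos hη hγ θ).ne').const_mul 2
  have hp := (hasDerivAt_gaussTail_div (aGKP / (2 * r)) (hasDerivAt_sigp hη hγ θ)
    (sigp_pos hη hγ θ).ne').const_mul 2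
  refine (hq.add hp).congr_deriv ?_
  have hσq := (sigq_pos hη hγ θ).ne'
  have hσp := (sigp_pos hη hγ θ).ne'
  simp only [balance, uq, up]
  field_simp
  ring

lemma strictAntiOn_strictMonoOn_of_hasDerivAt_pos_mul {f w B : ℝ → ℝ} {a b c : ℝ}
    (hf : ∀ x, HasDerivAt f (w x * B x) x) (hw : ∀ x ∈ Ioo a b, 0 < w x)
    (hB : StrictMonoOn B (Icc a b)) (hc : c ∈ Icc a b) (hBc : B c = 0) :
    StrictAntiOn f (Icc a c) ∧ StrictMonoOn f (Icc c b) := by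
  have hcont : ∀ s, ContinuousOn f s := fun s x _ => (hf x).continuousAt.continuousWithinAt
  constructor
  · refine strictAntiOn_of_deriv_neg (convex_Icc a c) (hcont _) fun x hx => ?_
    rw [interior_Icc] at hx
    have hBx : B x < 0 := hBc ▸ hB ⟨hx.1.le, hx.2.le.trans hc.2⟩ hc hx.2
    rw [(hf x).deriv]
    exact mul_neg_of_pos_of_neg (hw x ⟨hx.1, hx.2.trans_le hc.2⟩) hBx
  · refine strictMonoOn_of_deriv_pos (convex_Icc c b) (hcont _) fun x hx => ?_
    rw [interior_Icc] at hx
    have hBx : 0 < B x := hBc ▸ hB hc ⟨hc.1.trans hx.1.le, hx.2.le⟩ hx.1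
    rw [(hf x).deriv]
    exact mul_pos (hw x ⟨hc.1.trans_lt hx.1, hx.2⟩) hBx

theorem total_error_min_at_balance_root_general (η γ r θs : ℝ) (hη : η ∈ Set.Ioo (0 : ℝ) 1)
    (hγ : 0 < γ) (hr : 0 < r)
    (hreg : ∀ θ ∈ Set.Icc (0 : ℝ) (Real.pi / 2),
      Real.sqrt 3 < uq η γ r θ ∧ Real.sqrt 3 < up η γ r θ)
    (hθs : θs ∈ Set.Ioo (0 : ℝ) (Real.pi / 2)) (hroot : balance η γ r θs = 0) :
    StrictAntiOn (fun θ => Pq η γ r θ + Pp η γ r θ) (Set.Icc 0 θs) ∧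
    StrictMonoOn (fun θ => Pq η γ r θ + Pp η γ r θ) (Set.Icc θs (Real.pi / 2)) ∧
    ∀ θ ∈ Set.Icc (0 : ℝ) (Real.pi / 2), θ ≠ θs →
      Pq η γ r θs + Pp η γ r θs < Pq η γ r θ + Pp η γ r θ := by
  obtain ⟨hθs₀, hθs₁⟩ := hθs
  have hweight : ∀ θ ∈ Ioo 0 (π / 2), 0 < aGKP * γ * sin θ * cos θ / r := fun θ hθ => by
    have hsin := sin_pos_of_pos_of_lt_pi hθ.1 (by linarith [hθ.2, pi_pos])
    have hcos := cos_pos_of_mem_Ioo ⟨by linarith [hθ.1, pi_pos], hθ.2⟩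
    have ha : 0 < aGKP := sqrt_pos.2 (by positivity)
    positivity
  obtain ⟨hanti, hmono⟩ := strictAntiOn_strictMonoOn_of_hasDerivAt_pos_mul
    (hasDerivAt_totalError hη hγ.le) hweight (strictMonoOn_balance hη hγ hr hreg)
    ⟨hθs₀.le, hθs₁.le⟩ hroot
  refine ⟨hanti, hmono, fun θ hθ hne => ?_⟩
  rcases hne.lt_or_gt with h | h
  · exact hanti ⟨hθ.1, h.le⟩ ⟨hθs₀.le, le_rfl⟩ h
  · exact hmono ⟨le_rfl, hθs₁.le⟩ ⟨h.le, hθ.2⟩ h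

/-- under the regime condition with `B(0) < 0 < B(π/2)`, letting
`θ* ∈ (0, π/2)` be the (unique) zero of the balance function, the total error
`P̃ = P_q + P_p` is strictly decreasing on `[0, θ*]`, strictly increasing on `[θ*, π/2]`,
and attains its strict global minimum on `[0, π/2]` uniquely at `θ*`. -/
theorem total_error_min_at_balance_root (η γ r θs : ℝ) (hη : η ∈ Set.Ioo (0 : ℝ) 1)
    (hγ : 0 < γ) (hr : 0 < r)
    (hreg : ∀ θ ∈ Set.Icc (0 : ℝ) (Real.pi / 2),
      Real.sqrt 3 < uq η γ r θ ∧ Real.sqrt 3 < up η γ r θ)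
    (hB0 : balance η γ r 0 < 0) (hB1 : 0 < balance η γ r (Real.pi / 2))
    (hθs : θs ∈ Set.Ioo (0 : ℝ) (Real.pi / 2)) (hroot : balance η γ r θs = 0) :
    StrictAntiOn (fun θ => Pq η γ r θ + Pp η γ r θ) (Set.Icc 0 θs) ∧
    StrictMonoOn (fun θ => Pq η γ r θ + Pp η γ r θ) (Set.Icc θs (Real.pi / 2)) ∧
    ∀ θ ∈ Set.Icc (0 : ℝ) (Real.pi / 2), θ ≠ θs →
      Pq η γ r θs + Pp η γ r θs < Pq η γ r θ + Pp η γ r θ :=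
  total_error_min_at_balance_root_general η γ r θs hη hγ hr hreg hθs hroot
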